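/- Let n ≥ 1 be an integer, α ∈ (0,n) and T > 0. Then there exists a constant C > 0, depending only on n, α and T, such that for every x ∈ ℝⁿ and every t with 0 < t ≤ T one has t^α · P_t(x) ≤ C · ∫_{ℝⁿ} G_α(y) P_t(x−y) dy. Consequently, for every measurable g : ℝⁿ → [0,∞], every x ∈ ℝⁿ and every t ∈ (0,T]: t^α · ∫_{ℝⁿ} P_t(x−y) g(y) dy ≤ C · ∫_{ℝⁿ} P_t(x−y) (G_α ∗ g)(y) dy (inequalities in [0,∞]). -/

import Mathlib

open MeasureTheory Metric Set
open scoped ENNReal NNReal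

/-- The (unnormalized) Bessel kernel `G_α` on `ℝⁿ`, with values in `[0,∞]`. -/
noncomputable def besselKernel (n : ℕ) (α : ℝ) (x : EuclideanSpace ℝ (Fin n)) : ℝ≥0∞ :=
  ∫⁻ u in Set.Ioi (0 : ℝ),
    ENNReal.ofReal (Real.exp (-(Real.pi * ‖x‖ ^ 2 / u) - u / (4 * Real.pi)) *
      u ^ ((α - n) / 2 - 1))

/-- The (unnormalized) Poisson kernel `P_t` on `ℝⁿ`. -/
noncomputable def poissonKernelEuclid (n : ℕ) (t : ℝ) (x : EuclideanSpace ℝ (Fin n)) : ℝ :=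
  t / (t ^ 2 + ‖x‖ ^ 2) ^ (((n : ℝ) + 1) / 2)

/-!
On the ball `‖y‖ < t` around the origin two crude bounds hold: `G_α(y) ≳ ‖y‖^(α-n) ≥ t^(α-n)`
(since `α ≤ n`; the constant is uniform for `t ≤ T`), and `P_t(x - y) ≳ P_t(x)` (as
`t² + ‖x - y‖² ≤ 3 (t² + ‖x‖²)`). Integrating their product over the ball, of volume `≈ tⁿ`,
gives `∫ G_α(y) P_t(x - y) dy ≳ t^α P_t(x)`. The second inequality follows by integrating the
first (at `x - y`) against `g`, using associativity of convolution.
-/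

/-- Associativity and commutativity of convolution: `(k ∗ (f ∗ g)) x = ((f ∗ k) ∗ g) x`. -/
theorem lintegral_mul_lintegral_sub_mul_eq {G : Type*} [MeasurableSpace G] [AddCommGroup G]
    [MeasurableAdd₂ G] [MeasurableNeg G] (μ : Measure G) [μ.IsAddLeftInvariant] [SFinite μ]
    {f k g : G → ℝ≥0∞} (hf : Measurable f) (hk : Measurable k) (hg : Measurable g) (x : G) :
    ∫⁻ y, k (x - y) * (∫⁻ z, f (y - z) * g z ∂μ) ∂μ =
      ∫⁻ y, (∫⁻ z, f z * k (x - y - z) ∂μ) * g y ∂μ := by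
  have h := congrFun (lconvolution_assoc (μ := μ) hg hf hk) x
  simp only [lconvolution_def, neg_add_eq_sub] at h
  simp only [mul_comm (k _), mul_comm _ (g _)]
  exact h.symm

section Kernels

variable {n : ℕ} {α t : ℝ}

theorem measurable_besselKernel : Measurable (besselKernel n α) := by
  have : Measurable fun p : EuclideanSpace ℝ (Fin n) × ℝ =>
      ENNReal.ofReal (Real.exp (-(Real.pi * ‖p.1‖ ^ 2 / p.2) - p.2 / (4 * Real.pi)) *
        p.2 ^ ((α - n) / 2 - 1)) := by
    fun_prop
  exact this.lintegral_prod_right'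

theorem continuous_poissonKernelEuclid (ht : 0 < t) :
    Continuous (poissonKernelEuclid n t) :=
  continuous_const.div (by fun_prop (disch := intros; positivity)) fun _ => by positivity

theorem poissonKernelEuclid_pos (ht : 0 < t) (x : EuclideanSpace ℝ (Fin n)) :
    0 < poissonKernelEuclid n t x := by
  unfold poissonKernelEuclid
  positivity

theorem poissonKernelEuclid_le_sub (ht : 0 < t) (x : EuclideanSpace ℝ (Fin n))
    {y : EuclideanSpace ℝ (Fin n)} (hy : ‖y‖ ≤ t) :
    (3 : ℝ) ^ (-(((n : ℝ) + 1) / 2)) * poissonKernelEuclid n t x ≤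
      poissonKernelEuclid n t (x - y) := by
  have hx : 0 < t ^ 2 + ‖x‖ ^ 2 := by positivity
  have hxy : t ^ 2 + ‖x - y‖ ^ 2 ≤ 3 * (t ^ 2 + ‖x‖ ^ 2) := by
    have h : ‖x - y‖ ≤ ‖x‖ + t := (norm_sub_le x y).trans (by linarith)
    nlinarith [mul_self_le_mul_self (norm_nonneg _) h, sq_nonneg (‖x‖ - t)]
  have hpow : (t ^ 2 + ‖x - y‖ ^ 2) ^ (((n : ℝ) + 1) / 2) ≤
      3 ^ (((n : ℝ) + 1) / 2) * (t ^ 2 + ‖x‖ ^ 2) ^ (((n : ℝ) + 1) / 2) := by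
    rw [← Real.mul_rpow (by norm_num) hx.le]
    exact Real.rpow_le_rpow (by positivity) hxy (by positivity)
  unfold poissonKernelEuclid
  rw [Real.rpow_neg (by norm_num), inv_mul_eq_div, div_div, mul_comm]
  exact div_le_div_of_nonneg_left ht.le (by positivity) hpow

theorem besselIntegrand_ge_of_mem_Ioc {a R u c : ℝ} (ha : 0 < a) (haR : a ≤ R ^ 2)
    (hu : u ∈ Ioc a (2 * a)) (hc : c ≤ 0) :
    Real.exp (-Real.pi - R ^ 2 / (2 * Real.pi)) * (2 * a) ^ c ≤
      Real.exp (-(Real.pi * a / u) - u / (4 * Real.pi)) * u ^ c := by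
  have hu0 : 0 < u := ha.trans hu.1
  have hexp : -Real.pi - R ^ 2 / (2 * Real.pi) ≤ -(Real.pi * a / u) - u / (4 * Real.pi) := by
    have h1 : Real.pi * a / u ≤ Real.pi := by
      rw [div_le_iff₀ hu0]
      nlinarith [Real.pi_pos, hu.1]
    have h2 : u / (4 * Real.pi) ≤ R ^ 2 / (2 * Real.pi) := by
      rw [div_le_div_iff₀ (by positivity) (by positivity)]
      nlinarith [Real.pi_pos, hu.2]
    linarith
  exact mul_le_mul (Real.exp_le_exp.mpr hexp) (Real.rpow_le_rpow_of_nonpos hu0 hu.2 hc)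
    (by positivity) (by positivity)

theorem ofReal_mul_rpow_le_besselKernel (hα : α ≤ n + 2) {R : ℝ} {y : EuclideanSpace ℝ (Fin n)}
    (hy : y ≠ 0) (hyR : ‖y‖ ≤ R) :
    ENNReal.ofReal (Real.exp (-Real.pi - R ^ 2 / (2 * Real.pi)) * 2 ^ ((α - n) / 2 - 1) *
      ‖y‖ ^ (α - n)) ≤ besselKernel n α y := by
  set a := ‖y‖ ^ 2 with ha_def
  set K := Real.exp (-Real.pi - R ^ 2 / (2 * Real.pi)) * (2 * a) ^ ((α - n) / 2 - 1) with hK_def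
  have hy0 : 0 < ‖y‖ := norm_pos_iff.mpr hy
  have ha : 0 < a := by positivity
  have hK : 0 ≤ K := by positivity
  -- the integrand is `≥ K` on `(a, 2a]`, an interval of length `a = ‖y‖²`
  have hKa : Real.exp (-Real.pi - R ^ 2 / (2 * Real.pi)) * 2 ^ ((α - n) / 2 - 1) *
      ‖y‖ ^ (α - n) = K * a := by
    have hrpow : ‖y‖ ^ (α - n) = a ^ ((α - n) / 2 - 1) * a := by
      rw [← Real.rpow_add_one ha.ne', ha_def, ← Real.rpow_natCast, ← Real.rpow_mul hy0.le]
      ring_nf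
    rw [hrpow, hK_def, Real.mul_rpow zero_le_two ha.le]
    ring
  calc ENNReal.ofReal (Real.exp (-Real.pi - R ^ 2 / (2 * Real.pi)) * 2 ^ ((α - n) / 2 - 1) *
        ‖y‖ ^ (α - n))
      = ∫⁻ _ in Ioc a (2 * a), ENNReal.ofReal K := by
        rw [hKa, setLIntegral_const, Real.volume_Ioc, ENNReal.ofReal_mul hK]
        ring_nf
    _ ≤ ∫⁻ u in Ioc a (2 * a), ENNReal.ofReal
          (Real.exp (-(Real.pi * ‖y‖ ^ 2 / u) - u / (4 * Real.pi)) * u ^ ((α - n) / 2 - 1)) :=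
        setLIntegral_mono (by fun_prop) fun u hu => ENNReal.ofReal_le_ofReal <|
          besselIntegrand_ge_of_mem_Ioc ha (by nlinarith) hu (by linarith)
    _ ≤ besselKernel n α y := lintegral_mono_set fun u hu => ha.trans hu.1

theorem ofReal_mul_volume_ball_le_lintegral [NeZero n] (hαn : α ≤ n) {T : ℝ} (ht : 0 < t)
    (htT : t ≤ T) (x : EuclideanSpace ℝ (Fin n)) :
    ENNReal.ofReal (Real.exp (-Real.pi - T ^ 2 / (2 * Real.pi)) * 2 ^ ((α - n) / 2 - 1) *
        t ^ (α - n) * ((3 : ℝ) ^ (-(((n : ℝ) + 1) / 2)) * poissonKernelEuclid n t x)) *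
        volume (ball (0 : EuclideanSpace ℝ (Fin n)) t) ≤
      ∫⁻ y, besselKernel n α y * ENNReal.ofReal (poissonKernelEuclid n t (x - y)) := by
  have hmeas : Measurable fun y =>
      besselKernel n α y * ENNReal.ofReal (poissonKernelEuclid n t (x - y)) :=
    measurable_besselKernel.mul ((continuous_poissonKernelEuclid ht).measurable.comp
      (measurable_const.sub measurable_id)).ennreal_ofReal
  rw [← setLIntegral_const]
  refine (setLIntegral_mono_ae hmeas.aemeasurable ?_).trans (setLIntegral_le_lintegral _ _)
  filter_upwards [Measure.ae_ne volume 0] with y hy0 hy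
  have hyt : ‖y‖ ≤ t := (mem_ball_zero_iff.mp hy).le
  rw [ENNReal.ofReal_mul (by positivity)]
  refine mul_le_mul' ?_ ?_
  · refine le_trans (ENNReal.ofReal_le_ofReal ?_)
      (ofReal_mul_rpow_le_besselKernel (by linarith) hy0 (hyt.trans htT))
    have : t ^ (α - n) ≤ ‖y‖ ^ (α - n) :=
      Real.rpow_le_rpow_of_nonpos (norm_pos_iff.mpr hy0) hyt (by linarith)
    gcongr
  · exact ENNReal.ofReal_le_ofReal (poissonKernelEuclid_le_sub ht x hyt)

theorem exists_rpow_mul_poissonKernelEuclid_le [NeZero n] (hαn : α ≤ n) (T : ℝ) :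
    ∃ C : ℝ, 0 < C ∧ ∀ (x : EuclideanSpace ℝ (Fin n)) (t : ℝ), 0 < t → t ≤ T →
      ENNReal.ofReal (t ^ α * poissonKernelEuclid n t x) ≤
        ENNReal.ofReal C *
          ∫⁻ y, besselKernel n α y * ENNReal.ofReal (poissonKernelEuclid n t (x - y)) := by
  set c₁ := Real.exp (-Real.pi - T ^ 2 / (2 * Real.pi)) * 2 ^ ((α - n) / 2 - 1)
  set c₂ := (3 : ℝ) ^ (-(((n : ℝ) + 1) / 2))
  set V := (volume (ball (0 : EuclideanSpace ℝ (Fin n)) 1)).toReal with hV_def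
  have hV : 0 < V := ENNReal.toReal_pos (measure_ball_pos _ _ one_pos).ne' measure_ball_lt_top.ne
  have hκ : 0 < c₁ * c₂ * V := by positivity
  refine ⟨(c₁ * c₂ * V)⁻¹, inv_pos.mpr hκ, fun x t ht htT => ?_⟩
  have hP := poissonKernelEuclid_pos ht x
  have hball : volume (ball (0 : EuclideanSpace ℝ (Fin n)) t) = ENNReal.ofReal (t ^ n * V) := by
    rw [Measure.addHaar_ball _ _ ht.le, finrank_euclideanSpace_fin, hV_def,
      ENNReal.ofReal_mul (by positivity), ENNReal.ofReal_toReal measure_ball_lt_top.ne]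
  have hpow : t ^ (α - n) * t ^ n = t ^ α := by
    rw [← Real.rpow_natCast, ← Real.rpow_add ht, sub_add_cancel]
  have hlower := ofReal_mul_volume_ball_le_lintegral hαn ht htT x
  rw [hball, ← ENNReal.ofReal_mul (by positivity)] at hlower
  calc ENNReal.ofReal (t ^ α * poissonKernelEuclid n t x)
      = ENNReal.ofReal (c₁ * c₂ * V)⁻¹ *
          ENNReal.ofReal (c₁ * c₂ * V * (t ^ α * poissonKernelEuclid n t x)) := by
        rw [← ENNReal.ofReal_mul (by positivity), inv_mul_cancel_left₀ hκ.ne']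
    _ ≤ _ := by
        refine mul_le_mul_right (le_of_eq_of_le ?_ hlower) _
        rw [← hpow]
        congr 1
        simp only [c₁, c₂]
        ring

end Kernels

theorem statement6 (n : ℕ) (hn : 1 ≤ n) (α T : ℝ) (hα' : α < n) :
    ∃ C : ℝ, 0 < C ∧
      (∀ (x : EuclideanSpace ℝ (Fin n)) (t : ℝ), 0 < t → t ≤ T →
        ENNReal.ofReal (t ^ α * poissonKernelEuclid n t x) ≤
          ENNReal.ofReal C *
            ∫⁻ y, besselKernel n α y * ENNReal.ofReal (poissonKernelEuclid n t (x - y))) ∧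
      ∀ g : EuclideanSpace ℝ (Fin n) → ℝ≥0∞, Measurable g →
        ∀ (x : EuclideanSpace ℝ (Fin n)) (t : ℝ), 0 < t → t ≤ T →
          ENNReal.ofReal (t ^ α) * ∫⁻ y, ENNReal.ofReal (poissonKernelEuclid n t (x - y)) * g y ≤
            ENNReal.ofReal C *
              ∫⁻ y, ENNReal.ofReal (poissonKernelEuclid n t (x - y)) *
                (∫⁻ z, besselKernel n α (y - z) * g z) := by
  have : NeZero n := ⟨by omega⟩
  obtain ⟨C, hC, hpointwise⟩ := exists_rpow_mul_poissonKernelEuclid_le hα'.le T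
  refine ⟨C, hC, hpointwise, fun g hg x t ht htT => ?_⟩
  have hP : Measurable fun z => ENNReal.ofReal (poissonKernelEuclid n t z) :=
    (continuous_poissonKernelEuclid ht).measurable.ennreal_ofReal
  rw [lintegral_mul_lintegral_sub_mul_eq volume measurable_besselKernel hP hg,
    ← lintegral_const_mul' _ _ ENNReal.ofReal_ne_top,
    ← lintegral_const_mul' _ _ ENNReal.ofReal_ne_top]
  refine lintegral_mono fun y => ?_
  rw [← mul_assoc, ← mul_assoc, ← ENNReal.ofReal_mul (Real.rpow_nonneg ht.le α)]
  exact mul_le_mul_left (hpointwise (x - y) t ht htT) (g y)
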